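/- Let n ≥ 2 be an integer, u > 0, β ∈ ℝ, and let α be a real number with 0 ≤ α < n − 2 + max(β, 0) such that α does not belong to the set {m + max(β, 0) : m = 0, 1, …, n − 3}. Then the function g(x) = x^α (x + u)^{−β} does not preserve DN_n: there exists an n×n doubly nonnegative matrix A such that g(A) (defined by the functional calculus) is not doubly nonnegative. -/

import Mathlib

open Matrix Filter Set Topology

/-- Functional calculus for real symmetric matrices: apply `f` to the eigenvalues
in a spectral decomposition `A = U D Uᵀ`. -/
noncomputable def matFun {n : ℕ} (f : ℝ → ℝ) (A : Matrix (Fin n) (Fin n) ℝ) :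
    Matrix (Fin n) (Fin n) ℝ :=
  if hA : A.IsHermitian then
    (hA.eigenvectorUnitary : Matrix (Fin n) (Fin n) ℝ) *
      Matrix.diagonal (fun i => f (hA.eigenvalues i)) *
      (hA.eigenvectorUnitary : Matrix (Fin n) (Fin n) ℝ)ᴴ
  else 0

/-- A real matrix is doubly nonnegative if it is (symmetric) positive semidefinite
with all entries nonnegative. -/
def DN {n : ℕ} (A : Matrix (Fin n) (Fin n) ℝ) : Prop :=
  A.PosSemidef ∧ ∀ i j, 0 ≤ A i j

/-!
For `x > 0` the `d`-th derivative of `f x = x ^ α * (x + u) ^ (-β)` is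
`x ^ (α - d) * (x + u) ^ (-β - d) * P_d x` for a polynomial `P_d` of degree at most `d` with
`P_d 0 = u ^ d * (α)_d` and `d`-th coefficient `(α - β)_d` (falling factorials). The hypotheses
on `α` make `(α - max β 0)_d` negative for some `d < n`, so `f⁽ᵈ⁾ c < 0` for some `c > 0`,
taken near `0` if `β ≤ 0` and near `∞` if `β > 0`.

Let `T` be the adjacency matrix of the path `0 - 1 - ⋯ - (n-1)` and `A = c • 1 + ε • T`, which
is doubly nonnegative for small `ε > 0` by Gershgorin. Since `(A - c)^k = ε^k T^k` and `T^k` counts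
walks, `((A - c)^k) 0 d` vanishes for `k < d` and is at least `ε^d` for `k = d`. Expanding `f`
to order `d` around `c` on the spectrum of `A` gives
`f(A) 0 d = ε^d (f⁽ᵈ⁾ c / d!) (T^d) 0 d + o(ε^d) < 0`.
-/

open Polynomial SimpleGraph

lemma iteratedDerivWithin_eq_of_hasDerivAt {𝕜 E : Type*} [NontriviallyNormedField 𝕜]
    [NormedAddCommGroup E] [NormedSpace 𝕜 E] {F : ℕ → 𝕜 → E} {s : Set 𝕜} (hs : IsOpen s)
    (hF : ∀ k, ∀ x ∈ s, HasDerivAt (F k) (F (k + 1) x) x) (k : ℕ) {x : 𝕜} (hx : x ∈ s) :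
    iteratedDerivWithin k (F 0) s x = F k x := by
  induction k generalizing x with
  | zero => rfl
  | succ k ih =>
    rw [iteratedDerivWithin_succ]
    exact ((hF k x hx).hasDerivWithinAt.congr (fun y hy => ih hy) (ih hx)).derivWithin
      (hs.uniqueDiffWithinAt hx)

lemma exists_abs_sub_taylorWithinEval_le {f : ℝ → ℝ} {s : Set ℝ} {c η : ℝ} {d : ℕ}
    (hs : Convex ℝ s) (hcs : s ∈ 𝓝 c) (hf : ContDiffOn ℝ d f s) (hη : 0 < η) :
    ∃ r > 0, ∀ x, |x - c| < r → |f x - taylorWithinEval f d s c x| ≤ η * |x - c| ^ d := by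
  have ho := taylor_isLittleO hs (mem_of_mem_nhds hcs) hf
  rw [nhdsWithin_eq_nhds.2 hcs] at ho
  obtain ⟨r, hr, h⟩ := Metric.eventually_nhds_iff.1 (ho.def hη)
  exact ⟨r, hr, fun x hx => by simpa [abs_pow] using h hx⟩

lemma descPochhammer_add_two_eval_neg {m : ℕ} {t : ℝ} (h₁ : m < t) (h₂ : t < m + 1) :
    (descPochhammer ℝ (m + 2)).eval t < 0 := by
  rw [descPochhammer_succ_eval]
  refine mul_neg_of_pos_of_neg (descPochhammer_pos ?_) ?_
  · push_cast; linarith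
  · push_cast; linarith

lemma exists_descPochhammer_eval_neg {n : ℕ} (hn : 2 ≤ n) {t : ℝ} (ht : t < n - 2)
    (hne : ∀ m : ℕ, (m : ℝ) ≤ n - 3 → t ≠ m) : ∃ d < n, (descPochhammer ℝ d).eval t < 0 := by
  rcases lt_or_ge t 0 with ht0 | ht0
  · exact ⟨1, hn, by simpa using ht0⟩
  · set m := ⌊t⌋₊
    have hmt : (m : ℝ) ≤ t := Nat.floor_le ht0
    have hmn : m + 2 < n := by exact_mod_cast (show (m : ℝ) + 2 < n by linarith)
    refine ⟨m + 2, hmn, descPochhammer_add_two_eval_neg ?_ (Nat.lt_floor_add_one t)⟩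
    have : (m : ℝ) + 3 ≤ n := by exact_mod_cast hmn
    exact hmt.lt_of_ne (hne m (by linarith)).symm

noncomputable def iteratedDerivPoly (α β u : ℝ) : ℕ → ℝ[X]
  | 0 => 1
  | d + 1 => C (α - d) * ((X + C u) * iteratedDerivPoly α β u d)
      + C (-β - d) * (X * iteratedDerivPoly α β u d)
      + X * ((X + C u) * derivative (iteratedDerivPoly α β u d))

namespace iteratedDerivPoly

variable (α β u : ℝ)

lemma coeff_succ_succ (d m : ℕ) : (iteratedDerivPoly α β u (d + 1)).coeff (m + 1)
    = (α - β - 2 * d + m) * (iteratedDerivPoly α β u d).coeff m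
      + u * (α - d + m + 1) * (iteratedDerivPoly α β u d).coeff (m + 1) := by
  rw [iteratedDerivPoly]
  cases m with
  | zero =>
    simp only [coeff_add, coeff_C_mul, coeff_X_mul, add_mul, coeff_derivative, coeff_X_mul_zero]
    push_cast; ring
  | succ m =>
    simp only [coeff_add, coeff_C_mul, coeff_X_mul, add_mul, coeff_derivative]
    push_cast; ring

lemma coeff_eq_zero_of_lt {d m : ℕ} (h : d < m) : (iteratedDerivPoly α β u d).coeff m = 0 := by
  induction d generalizing m with
  | zero => simp [iteratedDerivPoly, coeff_one, h.ne']
  | succ d ih =>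
    obtain ⟨m, rfl⟩ := Nat.exists_eq_add_of_lt h
    rw [show d + 1 + m + 1 = (d + 1 + m) + 1 by ring, coeff_succ_succ, ih (by omega),
      ih (by omega)]
    ring

lemma coeff_self (d : ℕ) :
    (iteratedDerivPoly α β u d).coeff d = (descPochhammer ℝ d).eval (α - β) := by
  induction d with
  | zero => simp [iteratedDerivPoly]
  | succ d ih =>
    rw [coeff_succ_succ, ih, coeff_eq_zero_of_lt _ _ _ d.lt_succ_self, descPochhammer_succ_eval]
    ring

lemma natDegree_le (d : ℕ) : (iteratedDerivPoly α β u d).natDegree ≤ d :=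
  natDegree_le_iff_coeff_eq_zero.2 fun _ h => coeff_eq_zero_of_lt α β u (by exact_mod_cast h)

lemma eval_zero (d : ℕ) :
    (iteratedDerivPoly α β u d).eval 0 = u ^ d * (descPochhammer ℝ d).eval α := by
  induction d with
  | zero => simp [iteratedDerivPoly]
  | succ d ih =>
    simp only [iteratedDerivPoly, eval_add, eval_mul, eval_C, eval_X, ih, descPochhammer_succ_eval]
    ring

variable {α β u}

lemma exists_eval_neg_of_descPochhammer_eval_neg (hu : 0 < u) {d : ℕ}
    (h : (descPochhammer ℝ d).eval α < 0) : ∃ c > 0, (iteratedDerivPoly α β u d).eval c < 0 := by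
  set P := iteratedDerivPoly α β u d
  have h₀ : P.eval 0 < 0 := by
    rw [eval_zero]
    exact mul_neg_of_pos_of_neg (pow_pos hu d) h
  have hnear : ∀ᶠ x in 𝓝[>] 0, P.eval x < 0 ∧ 0 < x :=
    (((P.continuous.tendsto 0).eventually (gt_mem_nhds h₀)).filter_mono nhdsWithin_le_nhds).and
      self_mem_nhdsWithin
  obtain ⟨c, hneg, hc⟩ := hnear.exists
  exact ⟨c, hc, hneg⟩

lemma exists_eval_neg_of_descPochhammer_eval_sub_neg {d : ℕ}
    (h : (descPochhammer ℝ d).eval (α - β) < 0) :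
    ∃ c > 0, (iteratedDerivPoly α β u d).eval c < 0 := by
  set P := iteratedDerivPoly α β u d
  have hd : d ≠ 0 := by rintro rfl; simp at h; linarith
  have hdeg : P.natDegree = d := le_antisymm (natDegree_le α β u d)
    (le_natDegree_of_ne_zero (by rw [coeff_self]; exact h.ne))
  have hlead : P.leadingCoeff < 0 := by rwa [leadingCoeff, hdeg, coeff_self]
  have htend : Tendsto P.eval atTop atBot := P.tendsto_atBot_of_leadingCoeff_nonpos
    (natDegree_pos_iff_degree_pos.1 (by omega)) hlead.le
  obtain ⟨c, hneg, hc⟩ := ((htend.eventually (eventually_lt_atBot 0)).and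
    (eventually_gt_atTop 0)).exists
  exact ⟨c, hc, hneg⟩

end iteratedDerivPoly

section RpowMulRpow

variable {α β u : ℝ}

lemma hasDerivAt_rpow_mul_rpow_mul_iteratedDerivPoly (hu : 0 ≤ u) (d : ℕ) {x : ℝ} (hx : 0 < x) :
    HasDerivAt (fun y => y ^ (α - d) * (y + u) ^ (-β - d) * (iteratedDerivPoly α β u d).eval y)
      (x ^ (α - (d + 1 : ℕ)) * (x + u) ^ (-β - (d + 1 : ℕ)) *
        (iteratedDerivPoly α β u (d + 1)).eval x) x := by
  have hxu : 0 < x + u := by linarith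
  have h₁ := (hasDerivAt_id x).rpow_const (p := α - d) (Or.inl hx.ne')
  have h₂ := ((hasDerivAt_id x).add_const u).rpow_const (p := -β - d) (Or.inl hxu.ne')
  refine ((h₁.mul h₂).mul ((iteratedDerivPoly α β u d).hasDerivAt x)).congr_deriv ?_
  have e₁ : x ^ (α - d) = x ^ (α - (d + 1 : ℕ)) * x := by
    rw [← Real.rpow_add_one hx.ne']; push_cast; ring_nf
  have e₂ : (x + u) ^ (-β - d) = (x + u) ^ (-β - (d + 1 : ℕ)) * (x + u) := by
    rw [← Real.rpow_add_one hxu.ne']; push_cast; ring_nf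
  have e₃ : α - d - 1 = α - (d + 1 : ℕ) := by push_cast; ring
  have e₄ : -β - d - 1 = -β - (d + 1 : ℕ) := by push_cast; ring
  simp only [iteratedDerivPoly, eval_add, eval_mul, eval_C, eval_X, id, Pi.mul_apply, e₃, e₄]
  rw [e₁, e₂]
  ring

lemma iteratedDerivWithin_rpow_mul_rpow (hu : 0 ≤ u) (d : ℕ) {x : ℝ} (hx : 0 < x) :
    iteratedDerivWithin d (fun y => y ^ α * (y + u) ^ (-β)) (Ioi 0) x
      = x ^ (α - d) * (x + u) ^ (-β - d) * (iteratedDerivPoly α β u d).eval x := by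
  have h := iteratedDerivWithin_eq_of_hasDerivAt isOpen_Ioi
    (fun k _ hy => hasDerivAt_rpow_mul_rpow_mul_iteratedDerivPoly (α := α) (β := β) hu k hy) d hx
  simpa [iteratedDerivPoly] using h

lemma iteratedDerivWithin_rpow_mul_rpow_neg (hu : 0 ≤ u) {d : ℕ} {c : ℝ} (hc : 0 < c)
    (h : (iteratedDerivPoly α β u d).eval c < 0) :
    iteratedDerivWithin d (fun y => y ^ α * (y + u) ^ (-β)) (Ioi 0) c < 0 := by
  have hcu : 0 < c + u := by linarith
  rw [iteratedDerivWithin_rpow_mul_rpow hu d hc]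
  exact mul_neg_of_pos_of_neg (by positivity) h

lemma contDiffOn_rpow_mul_rpow (hu : 0 ≤ u) (d : ℕ) :
    ContDiffOn ℝ d (fun y => y ^ α * (y + u) ^ (-β)) (Ioi 0) := fun x hx =>
  ((Real.contDiffAt_rpow_const_of_ne (ne_of_gt hx)).mul
    ((contDiffAt_id.add contDiffAt_const).rpow_const_of_ne
      (by simp only [id]; linarith [mem_Ioi.1 hx]))).contDiffWithinAt

end RpowMulRpow

namespace SimpleGraph

variable {V : Type*} [Fintype V] [DecidableEq V] (G : SimpleGraph V) [DecidableRel G.Adj]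
  {u v : V}

lemma adjMatrix_pow_apply_eq_zero_of_lt_dist {R : Type*} [Semiring R] {k : ℕ}
    (hk : k < G.dist u v) : (G.adjMatrix R ^ k) u v = 0 := by
  have : IsEmpty {p : G.Walk u v | p.length = k} :=
    ⟨fun ⟨p, hp⟩ => (G.dist_le p).not_gt (hp ▸ hk)⟩
  rw [adjMatrix_pow_apply_eq_card_walk, Fintype.card_eq_zero, Nat.cast_zero]

lemma one_le_adjMatrix_pow_dist_apply (h : G.Reachable u v) :
    1 ≤ (G.adjMatrix ℝ ^ G.dist u v) u v := by
  obtain ⟨p, hp⟩ := h.exists_walk_length_eq_dist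
  rw [adjMatrix_pow_apply_eq_card_walk, Nat.one_le_cast]
  exact Fintype.card_pos_iff.2 ⟨⟨p, hp⟩⟩

lemma pathGraph_val_le_val_add_length {n : ℕ} {i j : Fin n} (p : (pathGraph n).Walk i j) :
    (j : ℕ) ≤ i + p.length := by
  induction p with
  | nil => simp
  | cons h _ ih =>
    rw [pathGraph_adj] at h
    simp only [Walk.length_cons]
    omega

lemma exists_pathGraph_walk_length_eq {n : ℕ} (d : ℕ) (hd : d < n) :
    ∃ p : (pathGraph n).Walk ⟨0, by omega⟩ ⟨d, hd⟩, p.length = d := by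
  induction d with
  | zero => exact ⟨Walk.nil, rfl⟩
  | succ d ih =>
    obtain ⟨p, hp⟩ := ih (by omega)
    exact ⟨p.concat (pathGraph_adj.2 (Or.inl rfl)), by rw [Walk.length_concat, hp]⟩

lemma pathGraph_dist_zero {n d : ℕ} (hd : d < n) :
    (pathGraph n).dist ⟨0, by omega⟩ ⟨d, hd⟩ = d := by
  refine le_antisymm ?_ ?_
  · obtain ⟨p, hp⟩ := exists_pathGraph_walk_length_eq d hd
    exact (dist_le p).trans hp.le
  · obtain ⟨p, hp⟩ :=
      (pathGraph_preconnected n ⟨0, by omega⟩ ⟨d, hd⟩).exists_walk_length_eq_dist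
    simpa [hp] using pathGraph_val_le_val_add_length p

end SimpleGraph

section MatrixFunction

variable {n : ℕ} {A : Matrix (Fin n) (Fin n) ℝ}

local notation "U" hA => ((Matrix.IsHermitian.eigenvectorUnitary hA : Matrix (Fin n) (Fin n) ℝ))

lemma matFun_eq_cfc (hA : A.IsHermitian) (f : ℝ → ℝ) : matFun f A = cfc f A := by
  rw [hA.cfc_eq, IsHermitian.cfc, matFun, dif_pos hA, Unitary.conjStarAlgAut_apply]
  rfl

lemma matFun_apply (hA : A.IsHermitian) (f : ℝ → ℝ) (i j : Fin n) :
    matFun f A i j = ∑ s, f (hA.eigenvalues s) * ((U hA) i s * (U hA) j s) := by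
  rw [matFun, dif_pos hA, mul_apply]
  refine Finset.sum_congr rfl fun s _ => ?_
  simp only [mul_diagonal, conjTranspose_apply, star_trivial]
  ring

lemma matFun_sub_pow (hA : A.IsHermitian) (c : ℝ) (k : ℕ) :
    matFun (fun x => (x - c) ^ k) A = (A - c • 1) ^ k := by
  rw [matFun_eq_cfc hA, cfc_pow _ _ _, cfc_sub _ _ _, cfc_id' ℝ A, cfc_const c A,
    Algebra.algebraMap_eq_smul_one]

lemma matFun_apply_eq_taylor (hA : A.IsHermitian) (f : ℝ → ℝ) (d : ℕ) (s : Set ℝ) (c : ℝ)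
    (i j : Fin n) :
    matFun f A i j = ∑ k ∈ Finset.range (d + 1),
        (k.factorial : ℝ)⁻¹ * iteratedDerivWithin k f s c * ((A - c • 1) ^ k) i j +
      ∑ t, (f (hA.eigenvalues t) - taylorWithinEval f d s c (hA.eigenvalues t)) *
        ((U hA) i t * (U hA) j t) := by
  simp only [← matFun_sub_pow hA, matFun_apply hA, taylor_within_apply, smul_eq_mul,
    Finset.mul_sum]
  rw [Finset.sum_comm, ← Finset.sum_add_distrib]
  refine Finset.sum_congr rfl fun t _ => ?_
  simp only [sub_mul, Finset.sum_mul, mul_assoc]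
  ring_nf

lemma abs_sum_mul_eigenvectorUnitary_le (hA : A.IsHermitian) (i j : Fin n) {g : Fin n → ℝ}
    {K : ℝ} (hK : 0 ≤ K) (hg : ∀ t, |g t| ≤ K) :
    |∑ t, g t * ((U hA) i t * (U hA) j t)| ≤ K := by
  have hrow : ∀ i, ∑ t, (U hA) i t ^ 2 = 1 := fun i => by
    simpa [mul_apply, sq] using congrFun₂ (Unitary.coe_mul_star_self hA.eigenvectorUnitary) i i
  have hamgm : ∀ t, |(U hA) i t * (U hA) j t| ≤ ((U hA) i t ^ 2 + (U hA) j t ^ 2) / 2 :=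
    fun t => by
      rw [abs_mul]
      nlinarith [sq_nonneg (|(U hA) i t| - |(U hA) j t|), sq_abs ((U hA) i t),
        sq_abs ((U hA) j t)]
  calc |∑ t, g t * ((U hA) i t * (U hA) j t)|
      ≤ ∑ t, K * (((U hA) i t ^ 2 + (U hA) j t ^ 2) / 2) := by
        refine (Finset.abs_sum_le_sum_abs _ _).trans (Finset.sum_le_sum fun t _ => ?_)
        rw [abs_mul]
        exact mul_le_mul (hg t) (hamgm t) (abs_nonneg _) hK
    _ = K := by
        rw [← Finset.mul_sum, ← Finset.sum_div, Finset.sum_add_distrib, hrow, hrow]; ring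

lemma Matrix.IsHermitian.exists_abs_eigenvalues_sub_le (hA : A.IsHermitian) (s : Fin n) :
    ∃ k, |hA.eigenvalues s - A k k| ≤ ∑ j ∈ Finset.univ.erase k, |A k j| := by
  have hs : Module.End.HasEigenvalue (toLin' A) (hA.eigenvalues s) := by
    rw [Module.End.hasEigenvalue_iff_mem_spectrum, spectrum_toLin']
    exact hA.eigenvalues_mem_spectrum_real s
  simpa [Real.dist_eq] using eigenvalue_mem_ball hs

variable (G : SimpleGraph (Fin n)) [DecidableRel G.Adj] (c ε : ℝ)

lemma smul_one_add_smul_adjMatrix_apply (i j : Fin n) :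
    (c • 1 + ε • G.adjMatrix ℝ) i j = if i = j then c else if G.Adj i j then ε else 0 := by
  by_cases h : i = j
  · simp [h]
  · simp [h, one_apply_ne h]

lemma isHermitian_smul_one_add_smul_adjMatrix :
    (c • 1 + ε • G.adjMatrix ℝ : Matrix (Fin n) (Fin n) ℝ).IsHermitian := by
  ext i j
  simp only [conjTranspose_apply, star_trivial, smul_one_add_smul_adjMatrix_apply, eq_comm,
    G.adj_comm]

variable {c ε}

lemma sum_taylor_smul_one_add_smul_adjMatrix_apply (f : ℝ → ℝ) (s : Set ℝ) {u v : Fin n} :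
    ∑ k ∈ Finset.range (G.dist u v + 1), (k.factorial : ℝ)⁻¹ * iteratedDerivWithin k f s c *
        ((c • 1 + ε • G.adjMatrix ℝ - c • 1) ^ k) u v
      = ((G.dist u v).factorial : ℝ)⁻¹ * iteratedDerivWithin (G.dist u v) f s c * ε ^ G.dist u v *
        (G.adjMatrix ℝ ^ G.dist u v) u v := by
  have hpow : ∀ k, ((c • 1 + ε • G.adjMatrix ℝ - c • 1) ^ k) u v
      = ε ^ k * (G.adjMatrix ℝ ^ k) u v := fun k => by
    rw [add_sub_cancel_left, _root_.smul_pow, Matrix.smul_apply, smul_eq_mul]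
  rw [Finset.sum_range_succ, Finset.sum_eq_zero fun k hk => by
    rw [hpow, G.adjMatrix_pow_apply_eq_zero_of_lt_dist (Finset.mem_range.1 hk), mul_zero,
      mul_zero], zero_add, hpow]
  ring

variable {G}

lemma abs_eigenvalues_sub_le_smul_maxDegree (hε : 0 ≤ ε)
    (hA : (c • 1 + ε • G.adjMatrix ℝ : Matrix (Fin n) (Fin n) ℝ).IsHermitian) (s : Fin n) :
    |hA.eigenvalues s - c| ≤ ε * G.maxDegree := by
  obtain ⟨k, hk⟩ := hA.exists_abs_eigenvalues_sub_le s
  have hrow : ∑ j ∈ Finset.univ.erase k, |(c • 1 + ε • G.adjMatrix ℝ) k j| = ε * G.degree k := by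
    calc _ = ∑ j ∈ Finset.univ.erase k, ε * (if G.Adj k j then 1 else 0) := by
          refine Finset.sum_congr rfl fun j hj => ?_
          rw [smul_one_add_smul_adjMatrix_apply, if_neg (Finset.ne_of_mem_erase hj).symm]
          split_ifs <;> simp [abs_of_nonneg hε]
      _ = ∑ j, ε * (if G.Adj k j then 1 else 0) := Finset.sum_erase _ (by simp)
      _ = ε * G.degree k := by
          rw [← Finset.mul_sum, Finset.sum_boole, ← neighborFinset_eq_filter,
            card_neighborFinset_eq_degree]
  rw [smul_one_add_smul_adjMatrix_apply, if_pos rfl, hrow] at hk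
  exact hk.trans (by gcongr; exact G.degree_le_maxDegree k)

lemma dn_smul_one_add_smul_adjMatrix (hε : 0 ≤ ε) (hc : ε * G.maxDegree ≤ c) :
    DN (c • 1 + ε • G.adjMatrix ℝ) := by
  have hA := isHermitian_smul_one_add_smul_adjMatrix G c ε
  refine ⟨hA.posSemidef_iff_eigenvalues_nonneg.2 fun s => ?_, fun i j => ?_⟩
  · have := abs_le.1 (abs_eigenvalues_sub_le_smul_maxDegree hε hA s)
    simp only [Pi.zero_apply]
    linarith
  · have : 0 ≤ c := (mul_nonneg hε (Nat.cast_nonneg _)).trans hc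
    rw [smul_one_add_smul_adjMatrix_apply]
    split_ifs <;> first | assumption | exact le_rfl

variable (G) in
theorem exists_dn_matFun_apply_neg {u v : Fin n} (huv : G.Reachable u v) {f : ℝ → ℝ} (hc : 0 < c)
    (hf : ContDiffOn ℝ (G.dist u v) f (Ioi 0))
    (hneg : iteratedDerivWithin (G.dist u v) f (Ioi 0) c < 0) :
    ∃ A, DN A ∧ matFun f A u v < 0 := by
  set d := G.dist u v
  set a := (d.factorial : ℝ)⁻¹ * iteratedDerivWithin d f (Ioi 0) c
  have ha : a < 0 := mul_neg_of_pos_of_neg (by positivity) hneg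
  set M : ℝ := G.maxDegree + 1
  have hM : 0 < M := by positivity
  set η := -a / (2 * M ^ d)
  have hη : 0 < η := div_pos (by linarith) (by positivity)
  obtain ⟨r, hr, hR⟩ :=
    exists_abs_sub_taylorWithinEval_le (convex_Ioi 0) (Ioi_mem_nhds hc) hf hη
  set ε := min c (r / 2) / M
  have hε : 0 < ε := div_pos (lt_min hc (by linarith)) hM
  have hεM : ε * M = min c (r / 2) := div_mul_cancel₀ _ hM.ne'
  set A : Matrix (Fin n) (Fin n) ℝ := c • 1 + ε • G.adjMatrix ℝ
  have hA := isHermitian_smul_one_add_smul_adjMatrix G c ε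
  refine ⟨A, dn_smul_one_add_smul_adjMatrix hε.le ?_, ?_⟩
  · calc ε * G.maxDegree ≤ ε * M := by gcongr; linarith
      _ ≤ c := hεM ▸ min_le_left _ _
  have herr : |∑ t, (f (hA.eigenvalues t) - taylorWithinEval f d (Ioi 0) c (hA.eigenvalues t)) *
      ((U hA) u t * (U hA) v t)| ≤ -a / 2 * ε ^ d := by
    refine abs_sum_mul_eigenvectorUnitary_le hA u v (by have := pow_pos hε d; nlinarith)
      fun t => ?_
    have hclose : |hA.eigenvalues t - c| ≤ ε * M :=
      (abs_eigenvalues_sub_le_smul_maxDegree hε.le hA t).trans (by gcongr; linarith)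
    calc _ ≤ η * |hA.eigenvalues t - c| ^ d :=
          hR _ (hclose.trans_lt (hεM ▸ (min_le_right _ _).trans_lt (by linarith)))
      _ ≤ η * (ε * M) ^ d := by gcongr
      _ = -a / 2 * ε ^ d := by
          rw [show η = -a / (2 * M ^ d) from rfl, mul_pow]; field_simp
  rw [matFun_apply_eq_taylor hA f d (Ioi 0) c u v, sum_taylor_smul_one_add_smul_adjMatrix_apply]
  have hN := G.one_le_adjMatrix_pow_dist_apply huv
  have hεd := pow_pos hε d
  nlinarith [abs_le.1 herr]

end MatrixFunction

theorem stmt_4_general (n : ℕ) (hn : 2 ≤ n) (u : ℝ) (hu : 0 < u) (β α : ℝ)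
    (hαlt : α < (n : ℝ) - 2 + max β 0)
    (hne : ∀ m : ℕ, (m : ℝ) ≤ (n : ℝ) - 3 → α ≠ m + max β 0) :
    ∃ A : Matrix (Fin n) (Fin n) ℝ,
      DN A ∧ ¬ DN (matFun (fun x => x ^ α * (x + u) ^ (-β)) A) := by
  classical
  obtain ⟨d, hdn, hd⟩ := exists_descPochhammer_eval_neg hn (t := α - max β 0) (by linarith)
    fun m hm h => hne m hm (by linarith)
  obtain ⟨c, hc, hP⟩ : ∃ c > 0, (iteratedDerivPoly α β u d).eval c < 0 := by
    rcases le_total β 0 with hβ | hβ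
    · rw [max_eq_right hβ, sub_zero] at hd
      exact iteratedDerivPoly.exists_eval_neg_of_descPochhammer_eval_neg hu hd
    · rw [max_eq_left hβ] at hd
      exact iteratedDerivPoly.exists_eval_neg_of_descPochhammer_eval_sub_neg hd
  have hdist := pathGraph_dist_zero hdn
  obtain ⟨A, hA, hfA⟩ := exists_dn_matFun_apply_neg (pathGraph n) (pathGraph_preconnected n _ _)
    hc (hdist ▸ contDiffOn_rpow_mul_rpow hu.le d)
    (hdist ▸ iteratedDerivWithin_rpow_mul_rpow_neg hu.le hc hP)
  exact ⟨A, hA, fun h => (h.2 _ _).not_gt hfA⟩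

theorem stmt_4 (n : ℕ) (hn : 2 ≤ n) (u : ℝ) (hu : 0 < u) (β α : ℝ)
    (hα0 : 0 ≤ α) (hαlt : α < (n : ℝ) - 2 + max β 0)
    (hne : ∀ m : ℕ, (m : ℝ) ≤ (n : ℝ) - 3 → α ≠ m + max β 0) :
    ∃ A : Matrix (Fin n) (Fin n) ℝ,
      DN A ∧ ¬ DN (matFun (fun x => x ^ α * (x + u) ^ (-β)) A) :=
  stmt_4_general n hn u hu β α hαlt hne
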